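/- arXiv:2509.14044 — 3 statements merged into one kernel-verified Lean document; each statement's English description precedes it below -/
import Mathlib

section
/- For all integers k ≥ 1 and 0 ≤ i ≤ k, the numbers m(k,i) defined by the recursion m(1,i) = C(1,i)·B(1-i) and m(k, k-i) = m(k-1, k-i-1) + ∑_{j=0}^{i-1} C(k-i+j, j) · m(k-1, k-i+j) satisfy the closed form m(k,i) = C(k,i)·B(k-i). -/
/-- The Bell number `B m`: the number of set partitions (equivalence
relations) of an `m`-element set. -/
noncomputable def bell (m : ℕ) : ℕ := Nat.card (Setoid (Fin m))

instance setoidFinite (α : Type*) [Finite α] : Finite (Setoid α) :=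
  Finite.of_injective (fun s : Setoid α => s.r) fun a b h =>
    Setoid.ext fun x y => iff_of_eq (congrFun (congrFun h x) y)

noncomputable instance setoidFintype (α : Type*) [Finite α] : Fintype (Setoid α) :=
  Fintype.ofFinite _

def setoidCongr {α β : Type*} (e : α ≃ β) : Setoid α ≃ Setoid β where
  toFun r := Setoid.comap e.symm r
  invFun r := Setoid.comap e r
  left_inv r := Setoid.ext fun x y => by simp [Setoid.comap_rel]
  right_inv r := Setoid.ext fun x y => by simp [Setoid.comap_rel]

variable {n : ℕ}

open Finset

open scoped Classical in
noncomputable def toSig (r : Setoid (Fin (n+1))) :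
    Σ s : Finset (Fin n), Setoid {a : Fin n // a ∉ s} :=
  ⟨Finset.univ.filter (fun a => r a.castSucc (Fin.last n)),
   Setoid.comap (fun a => (a.1.castSucc)) r⟩

noncomputable def psi (s : Finset (Fin n)) (r' : Setoid {a : Fin n // a ∉ s})
    (x : Fin (n+1)) : Option (Quotient r') :=
  if h : x = Fin.last n then none
  else if ha : x.castPred h ∈ s then none
  else some (Quotient.mk r' ⟨x.castPred h, ha⟩)

noncomputable def ofSig (p : Σ s : Finset (Fin n), Setoid {a : Fin n // a ∉ s}) :
    Setoid (Fin (n+1)) :=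
  Setoid.ker (psi p.1 p.2)

lemma psi_last (s : Finset (Fin n)) (r' : Setoid {a : Fin n // a ∉ s}) :
    psi s r' (Fin.last n) = none := dif_pos rfl

lemma psi_castSucc (s : Finset (Fin n)) (r' : Setoid {a : Fin n // a ∉ s}) (a : Fin n) :
    psi s r' a.castSucc =
      if ha : a ∈ s then none else some (Quotient.mk r' ⟨a, ha⟩) := by
  have h : a.castSucc ≠ Fin.last n := (Fin.castSucc_lt_last a).ne
  rw [psi, dif_neg h]
  simp [Fin.castPred_castSucc]
  rfl

lemma ofSig_toSig (r : Setoid (Fin (n+1))) : ofSig (toSig r) = r := by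
  classical
  apply Setoid.ext
  intro x y
  show psi _ _ x = psi _ _ y ↔ r x y
  have hmem : ∀ a : Fin n,
      (a ∈ (toSig r).1) ↔ r a.castSucc (Fin.last n) := by
    intro a; simp [toSig]
  induction x using Fin.lastCases with
  | last =>
    induction y using Fin.lastCases with
    | last => simpa using r.refl' (Fin.last n)
    | cast b =>
      rw [psi_last, psi_castSucc]
      by_cases hb : r b.castSucc (Fin.last n)
      · rw [dif_pos ((hmem b).2 hb)]
        simpa using r.symm' hb
      · rw [dif_neg (fun h => hb ((hmem b).1 h))]
        simp only [(Option.some_ne_none _).symm, false_iff]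
        exact fun h => hb (r.symm' h)
  | cast a =>
    induction y using Fin.lastCases with
    | last =>
      rw [psi_last, psi_castSucc]
      by_cases ha : r a.castSucc (Fin.last n)
      · rw [dif_pos ((hmem a).2 ha)]
        simpa using ha
      · rw [dif_neg (fun h => ha ((hmem a).1 h))]
        simp only [Option.some_ne_none, false_iff]
        exact ha
    | cast b =>
      rw [psi_castSucc, psi_castSucc]
      by_cases ha : r a.castSucc (Fin.last n) <;>
        by_cases hb : r b.castSucc (Fin.last n)
      · rw [dif_pos ((hmem a).2 ha), dif_pos ((hmem b).2 hb)]
        simpa using r.trans' ha (r.symm' hb)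
      · rw [dif_pos ((hmem a).2 ha), dif_neg (fun h => hb ((hmem b).1 h))]
        simp only [(Option.some_ne_none _).symm, false_iff]
        exact fun h => hb (r.trans' (r.symm' h) ha)
      · rw [dif_neg (fun h => ha ((hmem a).1 h)), dif_pos ((hmem b).2 hb)]
        simp only [Option.some_ne_none, false_iff]
        exact fun h => ha (r.trans' h hb)
      · rw [dif_neg (fun h => ha ((hmem a).1 h)), dif_neg (fun h => hb ((hmem b).1 h))]
        simp only [Option.some.injEq]
        rw [Quotient.eq]
        exact Iff.rfl

lemma sigma_eq_helper {s t : Finset (Fin n)} (h : s = t)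
    (r1 : Setoid {a : Fin n // a ∉ s}) (r2 : Setoid {a : Fin n // a ∉ t})
    (hr : ∀ a b (ha : a ∉ s) (hb : b ∉ s) (ha' : a ∉ t) (hb' : b ∉ t),
      r1 ⟨a, ha⟩ ⟨b, hb⟩ ↔ r2 ⟨a, ha'⟩ ⟨b, hb'⟩) :
    (⟨s, r1⟩ : Σ s : Finset (Fin n), Setoid {a : Fin n // a ∉ s}) = ⟨t, r2⟩ := by
  subst h
  congr 1
  apply Setoid.ext
  rintro ⟨a, ha⟩ ⟨b, hb⟩
  exact hr a b ha hb ha hb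

lemma toSig_ofSig (p : Σ s : Finset (Fin n), Setoid {a : Fin n // a ∉ s}) :
    toSig (ofSig p) = p := by
  classical
  obtain ⟨s, r'⟩ := p
  have hfil : ∀ (inst : DecidablePred fun a : Fin n => (ofSig ⟨s, r'⟩) a.castSucc (Fin.last n)),
      (Finset.univ.filter (fun a : Fin n => (ofSig ⟨s, r'⟩) a.castSucc (Fin.last n))) = s := by
    intro inst
    ext a
    simp only [Finset.mem_filter, Finset.mem_univ, true_and]
    show psi s r' a.castSucc = psi s r' (Fin.last n) ↔ a ∈ s
    rw [psi_last, psi_castSucc]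
    by_cases ha : a ∈ s
    · simp [ha]
    · simp [ha]
  refine sigma_eq_helper (hfil _) _ _ ?_
  intro a b ha hb ha' hb'
  show psi s r' a.castSucc = psi s r' b.castSucc ↔ r' ⟨a, ha'⟩ ⟨b, hb'⟩
  rw [psi_castSucc, psi_castSucc, dif_neg ha', dif_neg hb']
  simp only [Option.some.injEq]
  rw [Quotient.eq]

noncomputable def setoidSigmaEquiv (n : ℕ) :
    Setoid (Fin (n+1)) ≃ Σ s : Finset (Fin n), Setoid {a : Fin n // a ∉ s} where
  toFun := toSig
  invFun := ofSig
  left_inv := ofSig_toSig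
  right_inv := toSig_ofSig

lemma card_setoid_compl (s : Finset (Fin n)) :
    Nat.card (Setoid {a : Fin n // a ∉ s}) = bell (n - s.card) := by
  classical
  have hcard : Fintype.card {a : Fin n // a ∉ s} = n - s.card := by
    simp [Fintype.card_subtype_compl]
  have e : {a : Fin n // a ∉ s} ≃ Fin (n - s.card) :=
    Fintype.equivFinOfCardEq hcard
  exact Nat.card_congr (setoidCongr e)

lemma bell_succ (n : ℕ) : bell (n+1) = ∑ t ∈ Finset.range (n+1), n.choose t * bell t := by
  classical
  have h1 : bell (n+1) = ∑ s : Finset (Fin n), bell (n - s.card) := by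
    rw [bell, Nat.card_congr (setoidSigmaEquiv n), Nat.card_eq_fintype_card,
      Fintype.card_sigma]
    refine Finset.sum_congr rfl fun s _ => ?_
    rw [← Nat.card_eq_fintype_card, card_setoid_compl]
  rw [h1, ← Finset.powerset_univ,
    Finset.sum_powerset_apply_card (fun t => bell (n - t)) (x := (Finset.univ : Finset (Fin n)))]
  have hcu : (Finset.univ : Finset (Fin n)).card = n := by simp
  rw [hcu, ← Finset.sum_range_reflect]
  refine Finset.sum_congr rfl fun j hj => ?_
  rw [Finset.mem_range] at hj
  have hjn : j ≤ n := by omega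
  rw [smul_eq_mul]
  rw [show n + 1 - 1 - j = n - j from by omega, Nat.choose_symm hjn, Nat.sub_sub_self hjn]

lemma bell_sum_reflect (d : ℕ) :
    ∑ j ∈ Finset.range (d+1), d.choose j * bell (d - j) = bell (d+1) := by
  rw [bell_succ, ← Finset.sum_range_reflect]
  refine Finset.sum_congr rfl fun j hj => ?_
  rw [Finset.mem_range] at hj
  have hjd : j ≤ d := by omega
  rw [show d + 1 - 1 - j = d - j from by omega, Nat.choose_symm hjd, Nat.sub_sub_self hjd]

lemma key_sum (k i : ℕ) (hik : i ≤ k) :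
    k.choose i * bell (k+1-i) =
      ∑ j ∈ Finset.range (k+1-i), (i+j).choose j * (k.choose (i+j) * bell (k - (i+j))) := by
  have hd : k + 1 - i = (k - i) + 1 := by omega
  set d := k - i with hdd
  rw [hd]
  have hterm : ∀ j ∈ Finset.range (d+1),
      (i+j).choose j * (k.choose (i+j) * bell (k - (i+j)))
        = k.choose i * (d.choose j * bell (d - j)) := by
    intro j hj
    rw [Finset.mem_range] at hj
    have hjd : j ≤ d := by omega
    have h1 : k.choose (i+j) * (i+j).choose i = k.choose i * d.choose j := by
      have h2 := Nat.choose_mul (n := k) (Nat.le_add_right i j)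
      rw [Nat.add_sub_cancel_left] at h2
      rw [h2, hdd]
    have h3 : (i+j).choose i = (i+j).choose j := Nat.choose_symm_add
    rw [show k - (i+j) = d - j from by omega, ← h3]
    calc (i+j).choose i * (k.choose (i+j) * bell (d - j))
        = k.choose (i+j) * (i+j).choose i * bell (d - j) := by ring
      _ = k.choose i * d.choose j * bell (d - j) := by rw [h1]
      _ = k.choose i * (d.choose j * bell (d - j)) := by ring
  rw [Finset.sum_congr rfl hterm, ← Finset.mul_sum, bell_sum_reflect]

lemma key_total (k i' : ℕ) (hik : i' + 1 ≤ k + 1) :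
    (k+1).choose (i'+1) * bell (k+1-(i'+1)) =
      k.choose i' * bell (k+1-(i'+1)) +
        ∑ j ∈ Finset.range (k+1-(i'+1)),
          (i'+1+j).choose j * (k.choose (i'+1+j) * bell (k-(i'+1+j))) := by
  rw [Nat.choose_succ_succ, Nat.add_mul]
  congr 1
  rcases Nat.lt_or_ge i' k with h | h
  · exact key_sum k (i'+1) (by omega)
  · have hik' : k + 1 - (i'+1) = 0 := by omega
    rw [hik']
    simp [Nat.choose_eq_zero_of_lt (show k < i'+1 by omega)]

/-- If `m : ℕ → ℤ → ℤ` (with `m k j = 0` for negative indices `j`) satisfies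
the recursion `m(1,i) = C(1,i)·B(1-i)` and, for `k ≥ 2` and `i ≤ k`,
`m(k, k-i) = m(k-1, k-i-1) + ∑_{j=0}^{i-1} C(k-i+j, j) · m(k-1, k-i+j)`,
then it has the closed form `m(k,i) = C(k,i) · B(k-i)` for all `1 ≤ k` and
`0 ≤ i ≤ k`. -/
theorem multiplicity_closed_form (m : ℕ → ℤ → ℤ)
    (hneg : ∀ k : ℕ, ∀ j : ℤ, j < 0 → m k j = 0)
    (hbase : ∀ i : ℕ, m 1 (i : ℤ) = (Nat.choose 1 i : ℤ) * (bell (1 - i) : ℤ))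
    (hrec : ∀ k : ℕ, 2 ≤ k → ∀ i : ℕ, i ≤ k →
      m k ((k : ℤ) - (i : ℤ)) =
        m (k - 1) ((k : ℤ) - (i : ℤ) - 1) +
          ∑ j ∈ Finset.range i,
            ((k - i + j).choose j : ℤ) * m (k - 1) ((k : ℤ) - (i : ℤ) + (j : ℤ))) :
    ∀ k : ℕ, 1 ≤ k → ∀ i : ℕ, i ≤ k →
      m k (i : ℤ) = (k.choose i : ℤ) * (bell (k - i) : ℤ) := by
  intro k
  induction k with
  | zero => omega
  | succ k ih =>
    intro _ i hi
    rcases Nat.eq_zero_or_pos k with rfl | hk1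
    · exact hbase i
    · have hrec' := hrec (k+1) (by omega) (k+1-i) (by omega)
      simp only [show ((k+1 : ℕ) : ℤ) - ((k+1-i : ℕ) : ℤ) = (i : ℤ) from by omega,
        Nat.add_sub_cancel, show k+1-(k+1-i) = i from by omega] at hrec'
      have hsum : ∀ j ∈ Finset.range (k+1-i),
          (((i + j).choose j : ℕ) : ℤ) * m k ((i : ℤ) + (j : ℤ)) =
            (((i+j).choose j : ℕ) : ℤ) *
              (((k.choose (i+j) : ℕ) : ℤ) * ((bell (k - (i+j)) : ℕ) : ℤ)) := by
        intro j hj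
        rw [Finset.mem_range] at hj
        rw [show ((i : ℤ) + (j : ℤ)) = (((i + j : ℕ) : ℕ) : ℤ) from by push_cast; ring,
          ih hk1 (i+j) (by omega)]
      rw [Finset.sum_congr rfl hsum] at hrec'
      rcases i with _ | i'
      · rw [hneg k (((0:ℕ) : ℤ) - 1) (by norm_num), zero_add] at hrec'
        rw [hrec']
        have hks := key_sum k 0 (by omega)
        simp only [Nat.choose_zero_right] at hks ⊢
        exact_mod_cast hks.symm
      · have harg : ((i'+1 : ℕ) : ℤ) - 1 = ((i' : ℕ) : ℤ) := by push_cast; ring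
        rw [harg, ih hk1 i' (by omega),
          show k - i' = k + 1 - (i'+1) from by omega] at hrec'
        rw [hrec']
        exact_mod_cast (key_total k i' (by omega)).symm
end

section
/- For each n-restricted set partition ξ of {1,...,n+k} with parts B_1,...,B_n (where i ∈ B_i for 1 ≤ i ≤ n) and C_{n+1},...,C_{n+t}, the assignment sending ξ to the pair consisting of (a) the function assigning to each j ∈ {1,...,k} the index l ∈ {0,1,...,n} where l is the unique index with j+n ∈ B_l if such exists and l=0 otherwise, and (b) the set partition {C - n : C ∈ {C_{n+1},...,C_{n+t}}} of the remaining elements, is a bijection onto the set of pairs (f, D) where f: {1,...,k} → {0,1,...,n} and D is a set partition of f^{-1}(0). -/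
/-- A set partition `P` of `{1,…,n+k}` is `n`-restricted if the first `n`
elements lie in pairwise distinct parts. -/
def Restricted (n k : ℕ) (P : Setoid (Fin (n + k))) : Prop :=
  ∀ a b : Fin n, P.r (Fin.castAdd k a) (Fin.castAdd k b) → a = b

open Classical in
/-- The map sending an `n`-restricted set partition `ξ` of `{1,…,n+k}` to the
pair consisting of (a) the function `f : {1,…,k} → {0,1,…,n}` assigning to
`j` the unique `l ≥ 1` such that `j+n` lies in the part of `l`, if such
exists, and `0` otherwise; and (b) the set partition of `f⁻¹(0)` induced by
`ξ` on the remaining elements (shifted down by `n`). -/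
noncomputable def Phi (n k : ℕ) (P : {P : Setoid (Fin (n + k)) // Restricted n k P}) :
    Σ f : Fin k → Fin (n + 1), Setoid {j : Fin k // f j = 0} :=
  ⟨fun j =>
    if h : ∃ l : Fin n, P.1.r (Fin.natAdd n j) (Fin.castAdd k l) then
      ⟨h.choose.val + 1, Nat.succ_lt_succ h.choose.isLt⟩
    else 0,
   Setoid.comap (fun j => Fin.natAdd n j.1) P.1⟩

/-! The inverse rebuilds `ξ` from `(f, D)` as the kernel of a labelling of `{1,…,n+k}` by
`Fin n ⊕ Quotient D`: `i ≤ n` gets the label `i`, and `n + j` gets `f j - 1` if `f j ≠ 0` and its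
`D`-class otherwise. Such a labelling has kernel `ξ` as soon as the label `i` marks exactly the part
of `i` and the class labels separate the remaining parts (`Setoid.ker_eq_of_inl_iff`); both hold
because `1, …, n` lie in distinct parts, which makes the index in the definition of `f` unique. -/

theorem Setoid.ker_eq_of_inl_iff {α ι γ : Type*} (r : Setoid α) (a : ι → α) (g : α → ι ⊕ γ)
    (hinl : ∀ x i, g x = .inl i ↔ r x (a i))
    (hinr : ∀ x y c d, g x = .inr c → g y = .inr d → (c = d ↔ r x y)) :
    Setoid.ker g = r := by
  ext x y
  rw [Setoid.ker_def]
  have of_inl : ∀ {x y} i, g x = .inl i → (g x = g y ↔ r x y) := fun {x y} i hx => by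
    rw [hx, eq_comm, hinl]
    have hxa := (hinl x i).1 hx
    exact ⟨fun h => r.trans hxa (r.symm h), fun h => r.trans (r.symm h) hxa⟩
  rcases hx : g x with i | c
  · rw [← hx]; exact of_inl i hx
  rcases hy : g y with i | d
  · rw [← hx, ← hy, eq_comm]; exact (of_inl i hy).trans ⟨r.symm, r.symm⟩
  · rw [Sum.inr.injEq]; exact hinr x y c d hx hy

theorem Fin.eq_of_forall_eq_succ_iff {n : ℕ} {a b : Fin (n + 1)}
    (h : ∀ l : Fin n, a = l.succ ↔ b = l.succ) : a = b := by
  cases a using Fin.cases with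
  | zero =>
    cases b using Fin.cases with
    | zero => rfl
    | succ l => exact absurd ((h l).2 rfl) (Fin.succ_ne_zero l).symm
  | succ l => exact ((h l).1 rfl).symm

theorem Sigma.ext_setoid_subtype {ι κ : Type*} {c : κ}
    {x y : Σ f : ι → κ, Setoid {j // f j = c}} (h₁ : x.1 = y.1)
    (h₂ : ∀ a b (ha : x.1 a = c) (hb : x.1 b = c) (ha' : y.1 a = c) (hb' : y.1 b = c),
      x.2 ⟨a, ha⟩ ⟨b, hb⟩ ↔ y.2 ⟨a, ha'⟩ ⟨b, hb'⟩) : x = y := by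
  obtain ⟨f, D⟩ := x
  obtain ⟨g, E⟩ := y
  obtain rfl : f = g := h₁
  congr
  ext ⟨a, ha⟩ ⟨b, hb⟩
  exact h₂ a b ha hb ha hb

namespace Phi

variable {n k : ℕ}

theorem fst_eq_succ_iff (P : {P : Setoid (Fin (n + k)) // Restricted n k P}) (j : Fin k)
    (l : Fin n) : (Phi n k P).1 j = l.succ ↔ P.1 (Fin.natAdd n j) (Fin.castAdd k l) := by
  by_cases h : ∃ l : Fin n, P.1 (Fin.natAdd n j) (Fin.castAdd k l)
  · simp only [Phi, dif_pos h]
    change h.choose.succ = l.succ ↔ _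
    rw [Fin.succ_inj]
    constructor
    · rintro rfl; exact h.choose_spec
    · exact fun hl => P.2 _ _ (P.1.trans (P.1.symm h.choose_spec) hl)
  · simp only [Phi, dif_neg h]
    exact iff_of_false (Fin.succ_ne_zero l).symm fun hl => h ⟨l, hl⟩

noncomputable def label (f : Fin k → Fin (n + 1)) (D : Setoid {j // f j = 0}) :
    Fin (n + k) → Fin n ⊕ Quotient D :=
  Fin.addCases .inl fun j => if h : f j = 0 then .inr ⟦⟨j, h⟩⟧ else .inl ((f j).pred h)

section label

variable {f : Fin k → Fin (n + 1)} {D : Setoid {j // f j = 0}}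

@[simp] theorem label_castAdd (i : Fin n) : label f D (Fin.castAdd k i) = .inl i := by
  simp [label]

theorem label_natAdd_eq_inl_iff (j : Fin k) (l : Fin n) :
    label f D (Fin.natAdd n j) = .inl l ↔ f j = l.succ := by
  by_cases h : f j = 0
  · simp [label, h, (Fin.succ_ne_zero l).symm]
  · simp [label, h, Fin.pred_eq_iff_eq_succ]

theorem label_natAdd_of_eq_zero {j : Fin k} (h : f j = 0) :
    label f D (Fin.natAdd n j) = .inr ⟦⟨j, h⟩⟧ := by
  simp [label, h]

theorem exists_of_label_eq_inr {x : Fin (n + k)} {c : Quotient D} (hx : label f D x = .inr c) :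
    ∃ j h, x = Fin.natAdd n j ∧ c = ⟦⟨j, h⟩⟧ := by
  induction x using Fin.addCases with
  | left i => simp at hx
  | right j =>
    by_cases h : f j = 0
    · rw [label_natAdd_of_eq_zero h, Sum.inr.injEq] at hx
      exact ⟨j, h, rfl, hx.symm⟩
    · simp [label, h] at hx

end label

noncomputable def inv (fD : Σ f : Fin k → Fin (n + 1), Setoid {j // f j = 0}) :
    {P : Setoid (Fin (n + k)) // Restricted n k P} :=
  ⟨Setoid.ker (label fD.1 fD.2), fun a b h => by simpa [Setoid.ker_def] using h⟩

theorem inv_phi (P : {P : Setoid (Fin (n + k)) // Restricted n k P}) : inv (Phi n k P) = P := by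
  refine Subtype.ext (Setoid.ker_eq_of_inl_iff P.1 (Fin.castAdd k) _ (fun x i => ?_) ?_)
  · induction x using Fin.addCases with
    | left l => simpa using ⟨fun h => h ▸ P.1.refl _, P.2 l i⟩
    | right j => exact (label_natAdd_eq_inl_iff j i).trans (fst_eq_succ_iff P j i)
  · intro x y c d hx hy
    obtain ⟨i, hi, rfl, rfl⟩ := exists_of_label_eq_inr hx
    obtain ⟨j, hj, rfl, rfl⟩ := exists_of_label_eq_inr hy
    exact Quotient.eq

theorem phi_inv (fD : Σ f : Fin k → Fin (n + 1), Setoid {j // f j = 0}) :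
    Phi n k (inv fD) = fD := by
  obtain ⟨f, D⟩ := fD
  have hf : (Phi n k (inv ⟨f, D⟩)).1 = f := funext fun j =>
    Fin.eq_of_forall_eq_succ_iff fun l => by
      rw [fst_eq_succ_iff, ← label_natAdd_eq_inl_iff (D := D), ← label_castAdd (D := D)]
      rfl
  refine Sigma.ext_setoid_subtype hf fun a b _ _ ha hb => ?_
  change label f D _ = label f D _ ↔ _
  rw [label_natAdd_of_eq_zero ha, label_natAdd_of_eq_zero hb, Sum.inr.injEq]
  exact Quotient.eq

end Phi

/-- The assignment `ξ ↦ (f, D)` described above is a bijection from the set of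
`n`-restricted set partitions of `{1,…,n+k}` onto the set of pairs `(f, D)`
with `f : {1,…,k} → {0,1,…,n}` and `D` a set partition of `f⁻¹(0)`. -/
theorem phi_bijective (n k : ℕ) : Function.Bijective (Phi n k) :=
  Function.bijective_iff_has_inverse.2 ⟨Phi.inv, Phi.inv_phi, Phi.phi_inv⟩
end

section
/- Let σ be any permutation of {1,...,m}. The set of set partitions of {1,...,m} fixed (setwise, i.e., the permutation permutes the parts) by σ is nonempty and closed under the common refinement operation; moreover, for σ = σ_μ a product of disjoint cycles of lengths μ_1,...,μ_l covering {1,...,m}, every σ_μ-invariant set partition is uniquely of the form η(ξ, f, {g_P}) as constructed from a set partition ξ of {1,...,l}, a function f assigning to each part P of ξ a common divisor f(P) of all μ_i with i ∈ P, and functions g_P: P → {1,...,f(P)} with g_P(min P) = 1. -/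
/-- The permutation `σ_μ` of `{0,…,m-1}` (0-indexed) attached to a composition
`μ = (μ_1,…,μ_l)` of `m`: the product of the cycles on the consecutive blocks
of sizes `μ_1, …, μ_l`. -/
def sigmaC : List ℕ → ℕ → ℕ
  | [], x => x
  | c :: rest, x => if x < c then (x + 1) % c else c + sigmaC rest (x - c)

/-- `a i = μ_1 + ⋯ + μ_i`. -/
def partialSum (μ : List ℕ) (i : ℕ) : ℕ := (μ.take i).sum

/-- `PP` is a set partition of `{0,…,m-1}`. -/
def IsPartitionOn (m : ℕ) (PP : Set (Set ℕ)) : Prop :=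
  (∀ B ∈ PP, B.Nonempty ∧ B ⊆ Set.Iio m) ∧ ∀ x < m, ∃! B, B ∈ PP ∧ x ∈ B

/-- `PP` is fixed (setwise) by `σ`: the permutation permutes the parts. -/
def Invariant (σ : ℕ → ℕ) (PP : Set (Set ℕ)) : Prop := ∀ B ∈ PP, σ '' B ∈ PP

/-- The common refinement of two set partitions. -/
def commonRefinement (PP QQ : Set (Set ℕ)) : Set (Set ℕ) :=
  {S | ∃ B ∈ PP, ∃ C ∈ QQ, S = B ∩ C ∧ S.Nonempty}

/-- The datum `(ξ, f, {g_P})` of the construction `η`: a set partition `ξ` of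
`{0,…,l-1}` (`l` = number of parts of `μ`), a choice for each part `P` of `ξ`
of a common divisor `f P` of the `μ_i`, `i ∈ P`, and normalized functions
`g_P : P → {0,…,f(P)-1}` with `g_P(min P) = 0`. -/
structure EtaDatum (μ : List ℕ) where
  xi : Set (Set ℕ)
  f : Set ℕ → ℕ
  g : Set ℕ → ℕ → ℕ
  hxi : IsPartitionOn μ.length xi
  hf : ∀ P ∈ xi, ∀ i ∈ P, f P ∣ μ.getD i 0
  hf0 : ∀ P, P ∉ xi → f P = 0
  hg : ∀ P ∈ xi, ∀ i ∈ P, g P i < f P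
  hg0 : ∀ P i, P ∉ xi ∨ i ∉ P → g P i = 0
  hgmin : ∀ P ∈ xi, g P (sInf P) = 0

/-- The set `N_P = ∪_{i∈P} {a_i + g_P(i) + j·f(P) : 0 ≤ j < μ_i / f(P)}`. -/
def NP (μ : List ℕ) (D : EtaDatum μ) (P : Set ℕ) : Set ℕ :=
  ⋃ i ∈ P, {x | ∃ j : ℕ, j * D.f P < μ.getD i 0 ∧
    x = partialSum μ i + D.g P i + j * D.f P}

/-- The set partition `η(ξ, f, {g_P})`, whose parts are the sets
`σ_μ^r(N_P)` for parts `P` of `ξ` and `r ≥ 1`. -/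
def eta (μ : List ℕ) (D : EtaDatum μ) : Set (Set ℕ) :=
  {S | ∃ P ∈ D.xi, ∃ r : ℕ, 1 ≤ r ∧ S = (sigmaC μ)^[r] '' NP μ D P}

/-!
Write `x < m` as `a_j + o` with `o < μ_j`; then `σ_μ^r` rotates the offset `o` by `r` modulo
`μ_j`. Let `B` be a part of a `σ_μ`-invariant partition and `d` its period under `S ↦ σ_μ '' S`.
As `σ_μ^{μ_j}` fixes block `j` pointwise, `d ∣ μ_j` whenever `B` meets block `j`; and `a_j + o'`
lies in `B` together with `a_j + o` iff the rotation taking one to the other fixes `B`, i.e. iff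
`o' ≡ o (mod d)`. Let `ξ` be the partition of the block indices into the supports of the parts.
For `P ∈ ξ`, the part through `a_{min P}` meets each block `i ∈ P` in a residue class `g_P(i)`
modulo its period `f(P)`, so it is `N_P`, and every other part is a rotation of such an `N_P`.
Conversely, in any `η(ξ, f, {g_P})` the set `N_P` is the part containing `a_{min P}`; its support
is `P`, and its offsets in blocks `min P` and `i` determine `f(P)` and `g_P(i)`.
-/

open Function Set

section Partition

variable {m : ℕ} {PP QQ : Set (Set ℕ)}

theorem IsPartitionOn.eq_of_mem (hPP : IsPartitionOn m PP) {B C : Set ℕ} {x : ℕ}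
    (hB : B ∈ PP) (hC : C ∈ PP) (hxB : x ∈ B) (hxC : x ∈ C) : B = C :=
  (hPP.2 x ((hPP.1 B hB).2 hxB)).unique ⟨hB, hxB⟩ ⟨hC, hxC⟩

theorem IsPartitionOn.eq_of_subset (hPP : IsPartitionOn m PP) (hQQ : IsPartitionOn m QQ)
    (h : PP ⊆ QQ) : PP = QQ := by
  refine h.antisymm fun C hC => ?_
  obtain ⟨⟨x, hxC⟩, hCm⟩ := hQQ.1 C hC
  obtain ⟨B, ⟨hB, hxB⟩, -⟩ := hPP.2 x (hCm hxC)
  rwa [hQQ.eq_of_mem hC (h hB) hxC hxB]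

theorem isPartitionOn_singletons (m : ℕ) : IsPartitionOn m {S | ∃ x < m, S = {x}} := by
  refine ⟨?_, fun x hx => ⟨{x}, ⟨⟨x, hx, rfl⟩, rfl⟩, ?_⟩⟩
  · rintro B ⟨x, hx, rfl⟩
    exact ⟨singleton_nonempty x, singleton_subset_iff.2 hx⟩
  · rintro C ⟨⟨y, -, rfl⟩, hxy⟩
    rw [mem_singleton_iff.1 hxy]

theorem invariant_singletons {σ : ℕ → ℕ} (hσ : MapsTo σ (Iio m) (Iio m)) :
    Invariant σ {S | ∃ x < m, S = {x}} := by
  rintro B ⟨x, hx, rfl⟩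
  exact ⟨σ x, hσ hx, image_singleton⟩

theorem isPartitionOn_commonRefinement (hPP : IsPartitionOn m PP) (hQQ : IsPartitionOn m QQ) :
    IsPartitionOn m (commonRefinement PP QQ) := by
  refine ⟨?_, fun x hx => ?_⟩
  · rintro S ⟨B, hB, C, -, rfl, hne⟩
    exact ⟨hne, inter_subset_left.trans (hPP.1 B hB).2⟩
  · obtain ⟨B, ⟨hB, hxB⟩, -⟩ := hPP.2 x hx
    obtain ⟨C, ⟨hC, hxC⟩, -⟩ := hQQ.2 x hx
    refine ⟨B ∩ C, ⟨⟨B, hB, C, hC, rfl, x, hxB, hxC⟩, hxB, hxC⟩, ?_⟩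
    rintro S ⟨⟨B', hB', C', hC', rfl, -⟩, hxB', hxC'⟩
    rw [hPP.eq_of_mem hB' hB hxB' hxB, hQQ.eq_of_mem hC' hC hxC' hxC]

theorem invariant_commonRefinement {σ : ℕ → ℕ} (hσ : InjOn σ (Iio m))
    (hPP : IsPartitionOn m PP) (hQQ : IsPartitionOn m QQ) (hPi : Invariant σ PP)
    (hQi : Invariant σ QQ) : Invariant σ (commonRefinement PP QQ) := by
  rintro S ⟨B, hB, C, hC, rfl, hne⟩
  exact ⟨σ '' B, hPi B hB, σ '' C, hQi C hC,
    hσ.image_inter (hPP.1 B hB).2 (hQQ.1 C hC).2, hne.image σ⟩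

def partOf (PP : Set (Set ℕ)) (x : ℕ) : Set ℕ := {y | ∃ B ∈ PP, x ∈ B ∧ y ∈ B}

theorem IsPartitionOn.partOf_eq (hPP : IsPartitionOn m PP) {B : Set ℕ} {x : ℕ} (hB : B ∈ PP)
    (hx : x ∈ B) : partOf PP x = B := by
  ext y
  constructor
  · rintro ⟨C, hC, hxC, hyC⟩
    rwa [hPP.eq_of_mem hB hC hx hxC]
  · exact fun hy => ⟨B, hB, hx, hy⟩

theorem IsPartitionOn.partOf_mem (hPP : IsPartitionOn m PP) {x : ℕ} (hx : x < m) :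
    partOf PP x ∈ PP ∧ x ∈ partOf PP x := by
  obtain ⟨B, ⟨hB, hxB⟩, -⟩ := hPP.2 x hx
  rw [hPP.partOf_eq hB hxB]
  exact ⟨hB, hxB⟩

theorem Invariant.image_iterate_mem {σ : ℕ → ℕ} (h : Invariant σ PP) {B : Set ℕ} (hB : B ∈ PP)
    (r : ℕ) : σ^[r] '' B ∈ PP := by
  induction r with
  | zero => simpa using hB
  | succ r ih =>
    rw [iterate_succ', image_comp]
    exact h _ ih

theorem Invariant.image_iterate_eq_of_mem {σ : ℕ → ℕ} (h : Invariant σ PP)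
    (hPP : IsPartitionOn m PP) {B C : Set ℕ} (hB : B ∈ PP) (hC : C ∈ PP) {x r : ℕ} (hx : x ∈ B)
    (hrx : σ^[r] x ∈ C) : σ^[r] '' B = C :=
  hPP.eq_of_mem (h.image_iterate_mem hB r) hC (mem_image_of_mem _ hx) hrx

end Partition

section Blocks

variable {μ : List ℕ} {i j o o' : ℕ}

theorem getD_pos (hpos : ∀ c ∈ μ, 0 < c) (hj : j < μ.length) : 0 < μ.getD j 0 := by
  rw [List.getD_eq_getElem _ _ hj]
  exact hpos _ (List.getElem_mem hj)

theorem partialSum_succ (hi : i < μ.length) :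
    partialSum μ (i + 1) = partialSum μ i + μ.getD i 0 := by
  rw [partialSum, partialSum, List.sum_take_succ _ _ hi, List.getD_eq_getElem _ _ hi]

theorem partialSum_mono (μ : List ℕ) : Monotone (partialSum μ) := by
  intro i j hij
  obtain ⟨k, rfl⟩ := Nat.exists_eq_add_of_le hij
  simp only [partialSum, List.take_add, List.sum_append, Nat.le_add_right]

theorem partialSum_add_lt_sum (hi : i < μ.length) (ho : o < μ.getD i 0) :
    partialSum μ i + o < μ.sum := by
  have hlen : partialSum μ μ.length = μ.sum := by simp [partialSum]
  have := partialSum_mono μ (Nat.succ_le_of_lt hi)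
  rw [partialSum_succ hi, hlen] at this
  omega

theorem exists_partialSum_add {x : ℕ} (hx : x < μ.sum) :
    ∃ j < μ.length, ∃ o < μ.getD j 0, x = partialSum μ j + o := by
  induction μ generalizing x with
  | nil => simp at hx
  | cons c μ ih =>
    by_cases hxc : x < c
    · exact ⟨0, by simp, x, by simpa using hxc, by simp [partialSum]⟩
    · obtain ⟨j, hj, o, ho, hxo⟩ := ih (x := x - c) (by simp at hx; omega)
      refine ⟨j + 1, by simpa using hj, o, by simpa using ho, ?_⟩
      simp only [partialSum, List.take_succ_cons, List.sum_cons] at hxo ⊢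
      omega

theorem partialSum_add_inj (hi : i < μ.length) (hj : j < μ.length) (ho : o < μ.getD i 0)
    (ho' : o' < μ.getD j 0) (h : partialSum μ i + o = partialSum μ j + o') : i = j ∧ o = o' := by
  have key : ∀ {i j o o'}, i < j → i < μ.length → o < μ.getD i 0 →
      partialSum μ i + o ≠ partialSum μ j + o' := by
    intro i j o o' hij hi ho
    have := partialSum_mono μ (Nat.succ_le_of_lt hij)
    rw [partialSum_succ hi] at this
    omega
  rcases lt_trichotomy i j with hij | rfl | hji
  · exact absurd h (key hij hi ho)
  · exact ⟨rfl, by omega⟩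
  · exact absurd h.symm (key hji hj ho')

theorem sigmaC_partialSum_add (hi : i < μ.length) (ho : o < μ.getD i 0) :
    sigmaC μ (partialSum μ i + o) = partialSum μ i + (o + 1) % μ.getD i 0 := by
  induction μ generalizing i with
  | nil => simp at hi
  | cons c μ ih =>
    cases i with
    | zero =>
      simp only [List.getD_cons_zero] at ho
      simp [sigmaC, partialSum, ho]
    | succ i =>
      simp only [List.getD_cons_succ, List.length_cons, Nat.add_lt_add_iff_right] at ho hi ⊢
      have := ih hi ho
      simp only [partialSum, List.take_succ_cons, List.sum_cons] at this ⊢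
      rw [sigmaC, if_neg (by omega), show c + (μ.take i).sum + o - c = (μ.take i).sum + o by omega,
        this, Nat.add_assoc]

theorem sigmaC_iterate_partialSum_add (hi : i < μ.length) (ho : o < μ.getD i 0) (r : ℕ) :
    (sigmaC μ)^[r] (partialSum μ i + o) = partialSum μ i + (o + r) % μ.getD i 0 := by
  induction r with
  | zero => rw [iterate_zero_apply, Nat.add_zero, Nat.mod_eq_of_lt ho]
  | succ r ih =>
    rw [iterate_succ_apply', ih, sigmaC_partialSum_add hi (Nat.mod_lt _ (by omega)),
      Nat.mod_add_mod, Nat.add_assoc]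

theorem sigmaC_iterate_partialSum (hi : i < μ.length) (ho : o < μ.getD i 0) :
    (sigmaC μ)^[o] (partialSum μ i) = partialSum μ i + o := by
  have := sigmaC_iterate_partialSum_add hi (o := 0) (by omega) o
  rwa [Nat.add_zero, Nat.zero_add, Nat.mod_eq_of_lt ho] at this

theorem sigmaC_iterate_partialSum_add_shift (hi : i < μ.length) (ho : o < μ.getD i 0)
    (ho' : o' < μ.getD i 0) :
    (sigmaC μ)^[o' + μ.getD i 0 - o] (partialSum μ i + o) = partialSum μ i + o' := by
  rw [sigmaC_iterate_partialSum_add hi ho,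
    show o + (o' + μ.getD i 0 - o) = o' + μ.getD i 0 by omega, Nat.add_mod_right,
    Nat.mod_eq_of_lt ho']

theorem image_sigmaC_iterate_prod {S : Set ℕ} (hS : S ⊆ Iio μ.sum) :
    (sigmaC μ)^[μ.prod] '' S = S := by
  refine EqOn.image_eq_self fun x hx => ?_
  obtain ⟨j, hj, o, ho, rfl⟩ := exists_partialSum_add (hS hx)
  obtain ⟨k, hk⟩ : μ.getD j 0 ∣ μ.prod := by
    rw [List.getD_eq_getElem _ _ hj]
    exact List.dvd_prod (List.getElem_mem hj)
  rw [id, sigmaC_iterate_partialSum_add hj ho, hk, Nat.add_mul_mod_self_left, Nat.mod_eq_of_lt ho]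

theorem eq_of_forall_partialSum_add_mem_iff {S T : Set ℕ} (hS : S ⊆ Iio μ.sum)
    (hT : T ⊆ Iio μ.sum)
    (h : ∀ j < μ.length, ∀ o < μ.getD j 0, partialSum μ j + o ∈ S ↔ partialSum μ j + o ∈ T) :
    S = T := by
  ext x
  constructor
  · intro hx
    obtain ⟨j, hj, o, ho, rfl⟩ := exists_partialSum_add (hS hx)
    exact (h j hj o ho).1 hx
  · intro hx
    obtain ⟨j, hj, o, ho, rfl⟩ := exists_partialSum_add (hT hx)
    exact (h j hj o ho).2 hx

def blockSupport (μ : List ℕ) (B : Set ℕ) : Set ℕ :=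
  {j | j < μ.length ∧ ∃ o < μ.getD j 0, partialSum μ j + o ∈ B}

end Blocks

theorem Nat.eq_of_forall_lt_dvd_iff {a b n : ℕ} (hn : 0 < n) (ha : a ∣ n) (hb : b ∣ n)
    (h : ∀ o < n, a ∣ o ↔ b ∣ o) : a = b := by
  have key : ∀ {a b}, a ∣ n → b ∣ n → (∀ o < n, b ∣ o → a ∣ o) → a ∣ b := by
    intro a b ha hb h
    rcases (Nat.le_of_dvd hn hb).lt_or_eq with hbn | rfl
    · exact h b hbn dvd_rfl
    · exact ha
  exact Nat.dvd_antisymm (key ha hb fun o ho => (h o ho).2) (key hb ha fun o ho => (h o ho).1)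

namespace EtaDatum

variable {μ : List ℕ} (D : EtaDatum μ) {Q : Set ℕ} {j o : ℕ}

theorem lt_length (hQ : Q ∈ D.xi) (hj : j ∈ Q) : j < μ.length :=
  (D.hxi.1 Q hQ).2 hj

theorem f_le (hpos : ∀ c ∈ μ, 0 < c) (hQ : Q ∈ D.xi) (hj : j ∈ Q) : D.f Q ≤ μ.getD j 0 :=
  Nat.le_of_dvd (getD_pos hpos (D.lt_length hQ hj)) (D.hf Q hQ j hj)

theorem g_add_mul_lt (hQ : Q ∈ D.xi) (hj : j ∈ Q) {t : ℕ} (ht : t * D.f Q < μ.getD j 0) :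
    D.g Q j + t * D.f Q < μ.getD j 0 := by
  have hbound : t * D.f Q + D.f Q ≤ μ.getD j 0 :=
    Nat.le_of_lt_add_of_dvd (by omega) (Dvd.intro_left (t + 1) (Nat.succ_mul t _))
      (D.hf Q hQ j hj)
  have := D.hg Q hQ j hj
  omega

theorem mem_NP_iff (hQ : Q ∈ D.xi) (hj : j < μ.length) (ho : o < μ.getD j 0) :
    partialSum μ j + o ∈ NP μ D Q ↔ j ∈ Q ∧ o % D.f Q = D.g Q j := by
  simp only [NP, mem_iUnion]
  constructor
  · rintro ⟨i, hi, t, ht, heq⟩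
    obtain ⟨rfl, rfl⟩ := partialSum_add_inj (D.lt_length hQ hi) hj (D.g_add_mul_lt hQ hi ht) ho
      ((Nat.add_assoc _ _ _).symm.trans heq.symm)
    exact ⟨hi, by rw [Nat.add_mul_mod_self_right, Nat.mod_eq_of_lt (D.hg Q hQ i hi)]⟩
  · rintro ⟨hjQ, hmod⟩
    refine ⟨j, hjQ, o / D.f Q, (Nat.div_mul_le_self o _).trans_lt ho, ?_⟩
    rw [← hmod, Nat.add_assoc, Nat.mod_add_div']

theorem NP_subset (hQ : Q ∈ D.xi) : NP μ D Q ⊆ Iio μ.sum := by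
  simp only [NP, iUnion_subset_iff]
  rintro i hi _ ⟨t, ht, rfl⟩
  rw [Nat.add_assoc]
  exact partialSum_add_lt_sum (D.lt_length hQ hi) (D.g_add_mul_lt hQ hi ht)

theorem mem_eta_iff (hpos : ∀ c ∈ μ, 0 < c) {S : Set ℕ} :
    S ∈ eta μ D ↔ ∃ Q ∈ D.xi, ∃ r, S = (sigmaC μ)^[r] '' NP μ D Q := by
  constructor
  · rintro ⟨Q, hQ, r, -, rfl⟩
    exact ⟨Q, hQ, r, rfl⟩
  · rintro ⟨Q, hQ, r, rfl⟩
    -- `σ_μ^{∏ μ_i}` is the identity, so the exponent may be taken positive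
    refine ⟨Q, hQ, r + μ.prod, (List.prod_pos hpos).trans_le (Nat.le_add_left _ _), ?_⟩
    rw [iterate_add, image_comp, image_sigmaC_iterate_prod (D.NP_subset hQ)]

theorem blockSupport_NP (hpos : ∀ c ∈ μ, 0 < c) (hQ : Q ∈ D.xi) :
    blockSupport μ (NP μ D Q) = Q := by
  ext j
  constructor
  · rintro ⟨hj, o, ho, hmem⟩
    exact ((D.mem_NP_iff hQ hj ho).1 hmem).1
  · intro hjQ
    have hg := D.hg Q hQ j hjQ
    have hlt := hg.trans_le (D.f_le hpos hQ hjQ)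
    exact ⟨D.lt_length hQ hjQ, D.g Q j, hlt,
      (D.mem_NP_iff hQ (D.lt_length hQ hjQ) hlt).2 ⟨hjQ, Nat.mod_eq_of_lt hg⟩⟩

theorem ext_of_NP (hpos : ∀ c ∈ μ, 0 < c) {D D' : EtaDatum μ} (hsub : D.xi ⊆ D'.xi)
    (hNP : ∀ Q ∈ D.xi, NP μ D Q = NP μ D' Q) : D = D' := by
  have hxi : D.xi = D'.xi := D.hxi.eq_of_subset D'.hxi hsub
  have hmod : ∀ Q ∈ D.xi, ∀ j ∈ Q, ∀ o < μ.getD j 0,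
      o % D.f Q = D.g Q j ↔ o % D'.f Q = D'.g Q j := by
    intro Q hQ j hj o ho
    simpa only [D.mem_NP_iff hQ (D.lt_length hQ hj) ho,
      D'.mem_NP_iff (hsub hQ) (D.lt_length hQ hj) ho, eq_iff_iff, hj, true_and]
      using congrArg (partialSum μ j + o ∈ ·) (hNP Q hQ)
  have hf : ∀ Q ∈ D.xi, D.f Q = D'.f Q := by
    intro Q hQ
    have hmin : sInf Q ∈ Q := Nat.sInf_mem (D.hxi.1 Q hQ).1
    refine Nat.eq_of_forall_lt_dvd_iff (getD_pos hpos (D.lt_length hQ hmin)) (D.hf Q hQ _ hmin)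
      (D'.hf Q (hsub hQ) _ hmin) fun o ho => ?_
    simpa [Nat.dvd_iff_mod_eq_zero, D.hgmin Q hQ, D'.hgmin Q (hsub hQ)] using hmod Q hQ _ hmin o ho
  have hg : ∀ Q ∈ D.xi, ∀ j ∈ Q, D.g Q j = D'.g Q j := by
    intro Q hQ j hj
    have hg := D.hg Q hQ j hj
    rw [← (hmod Q hQ j hj _ (hg.trans_le (D.f_le hpos hQ hj))).1 (Nat.mod_eq_of_lt hg), ← hf Q hQ,
      Nat.mod_eq_of_lt hg]
  obtain ⟨xi, f, g, _, _, hf0, _, hg0, _⟩ := D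
  obtain ⟨xi', f', g', _, _, hf0', _, hg0', _⟩ := D'
  obtain rfl : xi = xi' := hxi
  obtain rfl : f = f' := by
    funext Q
    by_cases hQ : Q ∈ xi
    · exact hf Q hQ
    · rw [hf0 Q hQ, hf0' Q hQ]
  obtain rfl : g = g' := by
    funext Q j
    by_cases hQj : Q ∈ xi ∧ j ∈ Q
    · exact hg Q hQj.1 j hQj.2
    · rw [hg0 Q j (not_and_or.1 hQj), hg0' Q j (not_and_or.1 hQj)]
  rfl

end EtaDatum

section Canonical

variable {μ : List ℕ} {PP : Set (Set ℕ)} {B Q : Set ℕ} {i j o o' : ℕ}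

theorem partOf_partialSum_mem (hpos : ∀ c ∈ μ, 0 < c) (hPP : IsPartitionOn μ.sum PP)
    (hi : i < μ.length) :
    partOf PP (partialSum μ i) ∈ PP ∧ partialSum μ i ∈ partOf PP (partialSum μ i) :=
  hPP.partOf_mem (by simpa using partialSum_add_lt_sum hi (getD_pos hpos hi))

theorem blockSupport_image_sigmaC_iterate (hB : B ⊆ Iio μ.sum) (r : ℕ) :
    blockSupport μ ((sigmaC μ)^[r] '' B) = blockSupport μ B := by
  ext j
  constructor
  · rintro ⟨hj, o, ho, x, hx, hxo⟩
    obtain ⟨i, hi, o', ho', rfl⟩ := exists_partialSum_add (hB hx)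
    rw [sigmaC_iterate_partialSum_add hi ho'] at hxo
    obtain ⟨rfl, -⟩ := partialSum_add_inj hi hj (Nat.mod_lt _ (by omega)) ho hxo
    exact ⟨hi, o', ho', hx⟩
  · rintro ⟨hj, o, ho, hmem⟩
    exact ⟨hj, _, Nat.mod_lt _ (by omega), _, hmem, sigmaC_iterate_partialSum_add hj ho r⟩

theorem mem_blockSupport_partOf_self (hpos : ∀ c ∈ μ, 0 < c) (hPP : IsPartitionOn μ.sum PP)
    (hi : i < μ.length) : i ∈ blockSupport μ (partOf PP (partialSum μ i)) :=
  ⟨hi, 0, getD_pos hpos hi, by simpa using (partOf_partialSum_mem hpos hPP hi).2⟩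

theorem blockSupport_partOf_eq_of_mem (hpos : ∀ c ∈ μ, 0 < c) (hPP : IsPartitionOn μ.sum PP)
    (hInv : Invariant (sigmaC μ) PP) (hi : i < μ.length)
    (hj : j ∈ blockSupport μ (partOf PP (partialSum μ i))) :
    blockSupport μ (partOf PP (partialSum μ j)) = blockSupport μ (partOf PP (partialSum μ i)) := by
  obtain ⟨hjl, o, ho, hmem⟩ := hj
  have hBj := partOf_partialSum_mem hpos hPP hjl
  have hshift : (sigmaC μ)^[o] '' partOf PP (partialSum μ j) = partOf PP (partialSum μ i) :=
    hInv.image_iterate_eq_of_mem hPP hBj.1 (partOf_partialSum_mem hpos hPP hi).1 hBj.2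
      (by rwa [sigmaC_iterate_partialSum hjl ho])
  rw [← hshift, blockSupport_image_sigmaC_iterate (hPP.1 _ hBj.1).2]

noncomputable def period (μ : List ℕ) (B : Set ℕ) : ℕ :=
  minimalPeriod (image (sigmaC μ)) B

theorem image_sigmaC_iterate_eq_self_iff {r : ℕ} :
    (sigmaC μ)^[r] '' B = B ↔ period μ B ∣ r := by
  rw [period, ← isPeriodicPt_iff_minimalPeriod_dvd, IsPeriodicPt, IsFixedPt, ← image_iterate_eq]

theorem period_dvd (hPP : IsPartitionOn μ.sum PP) (hInv : Invariant (sigmaC μ) PP) (hB : B ∈ PP)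
    (hj : j ∈ blockSupport μ B) : period μ B ∣ μ.getD j 0 := by
  obtain ⟨hj, o, ho, hmem⟩ := hj
  refine image_sigmaC_iterate_eq_self_iff.1 (hInv.image_iterate_eq_of_mem hPP hB hB hmem ?_)
  rw [sigmaC_iterate_partialSum_add hj ho, Nat.add_mod_right, Nat.mod_eq_of_lt ho]
  exact hmem

theorem period_pos (hPP : IsPartitionOn μ.sum PP) (hInv : Invariant (sigmaC μ) PP) (hB : B ∈ PP) :
    0 < period μ B := by
  obtain ⟨⟨x, hx⟩, hBm⟩ := hPP.1 B hB
  obtain ⟨j, hj, o, ho, rfl⟩ := exists_partialSum_add (hBm hx)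
  exact Nat.pos_of_dvd_of_pos (period_dvd hPP hInv hB ⟨hj, o, ho, hx⟩) (by omega)

theorem mem_iff_mod_period_eq (hPP : IsPartitionOn μ.sum PP) (hInv : Invariant (sigmaC μ) PP)
    (hB : B ∈ PP) (hj : j < μ.length) (ho : o < μ.getD j 0) (ho' : o' < μ.getD j 0)
    (hmem : partialSum μ j + o ∈ B) :
    partialSum μ j + o' ∈ B ↔ o' % period μ B = o % period μ B := by
  have hshift := sigmaC_iterate_partialSum_add_shift hj ho ho'
  have hμ : o' + μ.getD j 0 ≡ o' [MOD period μ B] := by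
    simpa using (Nat.modEq_zero_iff_dvd.2 (period_dvd hPP hInv hB ⟨hj, o, ho, hmem⟩)).add_left o'
  calc partialSum μ j + o' ∈ B ↔ (sigmaC μ)^[o' + μ.getD j 0 - o] '' B = B :=
        ⟨fun h => hInv.image_iterate_eq_of_mem hPP hB hB hmem (hshift ▸ h),
          fun h => h ▸ hshift ▸ mem_image_of_mem _ hmem⟩
    _ ↔ period μ B ∣ o' + μ.getD j 0 - o := image_sigmaC_iterate_eq_self_iff
    _ ↔ o ≡ o' + μ.getD j 0 [MOD period μ B] := (Nat.modEq_iff_dvd' (by omega)).symm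
    _ ↔ o' ≡ o [MOD period μ B] := ⟨fun h => (h.trans hμ).symm, fun h => h.symm.trans hμ.symm⟩

def canonicalXi (μ : List ℕ) (PP : Set (Set ℕ)) : Set (Set ℕ) :=
  {Q | ∃ i < μ.length, Q = blockSupport μ (partOf PP (partialSum μ i))}

theorem isPartitionOn_canonicalXi (hpos : ∀ c ∈ μ, 0 < c) (hPP : IsPartitionOn μ.sum PP)
    (hInv : Invariant (sigmaC μ) PP) : IsPartitionOn μ.length (canonicalXi μ PP) := by
  refine ⟨?_, fun i hi => ⟨_, ⟨⟨i, hi, rfl⟩, mem_blockSupport_partOf_self hpos hPP hi⟩, ?_⟩⟩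
  · rintro _ ⟨i, hi, rfl⟩
    exact ⟨⟨i, mem_blockSupport_partOf_self hpos hPP hi⟩, fun j hj => hj.1⟩
  · rintro _ ⟨⟨k, hk, rfl⟩, hik⟩
    exact (blockSupport_partOf_eq_of_mem hpos hPP hInv hk hik).symm

theorem canonicalXi_eq (hpos : ∀ c ∈ μ, 0 < c) (hPP : IsPartitionOn μ.sum PP)
    (hInv : Invariant (sigmaC μ) PP) (hQ : Q ∈ canonicalXi μ PP) :
    sInf Q < μ.length ∧ sInf Q ∈ Q ∧ Q = blockSupport μ (partOf PP (partialSum μ (sInf Q))) := by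
  obtain ⟨i, hi, rfl⟩ := hQ
  have hmin := Nat.sInf_mem ⟨i, mem_blockSupport_partOf_self hpos hPP hi⟩
  exact ⟨hmin.1, hmin, (blockSupport_partOf_eq_of_mem hpos hPP hInv hi hmin).symm⟩

open Classical in
noncomputable def canonicalF (μ : List ℕ) (PP : Set (Set ℕ)) (Q : Set ℕ) : ℕ :=
  if Q ∈ canonicalXi μ PP then period μ (partOf PP (partialSum μ (sInf Q))) else 0

open Classical in
noncomputable def canonicalG (μ : List ℕ) (PP : Set (Set ℕ)) (Q : Set ℕ) (j : ℕ) : ℕ :=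
  if Q ∈ canonicalXi μ PP ∧ j ∈ Q then
    sInf {o | partialSum μ j + o ∈ partOf PP (partialSum μ (sInf Q))} % canonicalF μ PP Q
  else 0

theorem mem_partOf_iff (hpos : ∀ c ∈ μ, 0 < c) (hPP : IsPartitionOn μ.sum PP)
    (hInv : Invariant (sigmaC μ) PP) (hQ : Q ∈ canonicalXi μ PP) (hj : j < μ.length)
    (ho : o < μ.getD j 0) :
    partialSum μ j + o ∈ partOf PP (partialSum μ (sInf Q)) ↔
      j ∈ Q ∧ o % canonicalF μ PP Q = canonicalG μ PP Q j := by
  obtain ⟨hi0, -, hQeq⟩ := canonicalXi_eq hpos hPP hInv hQ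
  set B := partOf PP (partialSum μ (sInf Q))
  have hB : B ∈ PP := (partOf_partialSum_mem hpos hPP hi0).1
  have hleast : j ∈ Q → sInf {o | partialSum μ j + o ∈ B} < μ.getD j 0 ∧
      partialSum μ j + sInf {o | partialSum μ j + o ∈ B} ∈ B := by
    intro hjQ
    rw [hQeq] at hjQ
    obtain ⟨-, o₀, ho₀, hmem⟩ := hjQ
    have hmem₀ : o₀ ∈ {o | partialSum μ j + o ∈ B} := hmem
    exact ⟨(Nat.sInf_le hmem₀).trans_lt ho₀, Nat.sInf_mem ⟨o₀, hmem₀⟩⟩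
  rw [canonicalG, canonicalF, if_pos hQ]
  constructor
  · intro hmem
    have hjQ : j ∈ Q := hQeq ▸ ⟨hj, o, ho, hmem⟩
    obtain ⟨hlt, hmem₀⟩ := hleast hjQ
    rw [if_pos ⟨hQ, hjQ⟩]
    exact ⟨hjQ, (mem_iff_mod_period_eq hPP hInv hB hj hlt ho hmem₀).1 hmem⟩
  · rintro ⟨hjQ, hmod⟩
    obtain ⟨hlt, hmem₀⟩ := hleast hjQ
    rw [if_pos ⟨hQ, hjQ⟩] at hmod
    exact (mem_iff_mod_period_eq hPP hInv hB hj hlt ho hmem₀).2 hmod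

noncomputable def canonicalDatum (hpos : ∀ c ∈ μ, 0 < c) (hPP : IsPartitionOn μ.sum PP)
    (hInv : Invariant (sigmaC μ) PP) : EtaDatum μ where
  xi := canonicalXi μ PP
  f := canonicalF μ PP
  g := canonicalG μ PP
  hxi := isPartitionOn_canonicalXi hpos hPP hInv
  hf Q hQ j hj := by
    obtain ⟨hi0, -, hQeq⟩ := canonicalXi_eq hpos hPP hInv hQ
    rw [canonicalF, if_pos hQ]
    exact period_dvd hPP hInv (partOf_partialSum_mem hpos hPP hi0).1 (hQeq ▸ hj)
  hf0 Q hQ := if_neg hQ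
  hg Q hQ j hj := by
    obtain ⟨hi0, -, -⟩ := canonicalXi_eq hpos hPP hInv hQ
    rw [canonicalG, if_pos ⟨hQ, hj⟩, canonicalF, if_pos hQ]
    exact Nat.mod_lt _ (period_pos hPP hInv (partOf_partialSum_mem hpos hPP hi0).1)
  hg0 Q j h := if_neg (by tauto)
  hgmin Q hQ := by
    obtain ⟨hi0, -, -⟩ := canonicalXi_eq hpos hPP hInv hQ
    have h := (mem_partOf_iff hpos hPP hInv hQ hi0 (getD_pos hpos hi0)).1
      (by simpa using (partOf_partialSum_mem hpos hPP hi0).2)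
    simpa using h.2.symm

theorem NP_canonicalDatum (hpos : ∀ c ∈ μ, 0 < c) (hPP : IsPartitionOn μ.sum PP)
    (hInv : Invariant (sigmaC μ) PP) (hQ : Q ∈ canonicalXi μ PP) :
    NP μ (canonicalDatum hpos hPP hInv) Q = partOf PP (partialSum μ (sInf Q)) :=
  eq_of_forall_partialSum_add_mem_iff ((canonicalDatum hpos hPP hInv).NP_subset hQ)
    (hPP.1 _ (partOf_partialSum_mem hpos hPP (canonicalXi_eq hpos hPP hInv hQ).1).1).2
    fun _ hj _ ho => ((canonicalDatum hpos hPP hInv).mem_NP_iff hQ hj ho).trans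
      (mem_partOf_iff hpos hPP hInv hQ hj ho).symm

theorem eta_canonicalDatum (hpos : ∀ c ∈ μ, 0 < c) (hPP : IsPartitionOn μ.sum PP)
    (hInv : Invariant (sigmaC μ) PP) : eta μ (canonicalDatum hpos hPP hInv) = PP := by
  ext S
  rw [EtaDatum.mem_eta_iff _ hpos]
  constructor
  · rintro ⟨Q, hQ, r, rfl⟩
    rw [NP_canonicalDatum hpos hPP hInv hQ]
    exact hInv.image_iterate_mem
      (partOf_partialSum_mem hpos hPP (canonicalXi_eq hpos hPP hInv hQ).1).1 r
  · intro hS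
    obtain ⟨⟨x, hx⟩, hSm⟩ := hPP.1 S hS
    obtain ⟨j, hj, o, ho, rfl⟩ := exists_partialSum_add (hSm hx)
    have hQ : blockSupport μ (partOf PP (partialSum μ j)) ∈ canonicalXi μ PP := ⟨j, hj, rfl⟩
    obtain ⟨hi0, -, hQeq⟩ := canonicalXi_eq hpos hPP hInv hQ
    obtain ⟨-, o', ho', hmem'⟩ := hQeq ▸ mem_blockSupport_partOf_self hpos hPP hj
    refine ⟨_, hQ, o + μ.getD j 0 - o', ?_⟩
    rw [NP_canonicalDatum hpos hPP hInv hQ]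
    exact (hInv.image_iterate_eq_of_mem hPP (partOf_partialSum_mem hpos hPP hi0).1 hS hmem'
      (by rwa [sigmaC_iterate_partialSum_add_shift hj ho' ho])).symm

theorem eq_canonicalDatum_of_eta_eq (hpos : ∀ c ∈ μ, 0 < c) (hPP : IsPartitionOn μ.sum PP)
    (hInv : Invariant (sigmaC μ) PP) (D : EtaDatum μ) (hD : eta μ D = PP) :
    D = canonicalDatum hpos hPP hInv := by
  have key : ∀ Q ∈ D.xi,
      Q ∈ canonicalXi μ PP ∧ NP μ D Q = NP μ (canonicalDatum hpos hPP hInv) Q := by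
    intro Q hQ
    have hmin : sInf Q ∈ Q := Nat.sInf_mem (D.hxi.1 Q hQ).1
    have hi0 := D.lt_length hQ hmin
    have hNP : NP μ D Q ∈ PP :=
      hD ▸ (D.mem_eta_iff hpos).2 ⟨Q, hQ, 0, by rw [iterate_zero, image_id]⟩
    have ha : partialSum μ (sInf Q) ∈ NP μ D Q := by
      simpa using (D.mem_NP_iff hQ hi0 (getD_pos hpos hi0)).2 ⟨hmin, by simp [D.hgmin Q hQ]⟩
    have hpart : partOf PP (partialSum μ (sInf Q)) = NP μ D Q := hPP.partOf_eq hNP ha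
    have hQcan : Q ∈ canonicalXi μ PP :=
      ⟨sInf Q, hi0, by rw [hpart, D.blockSupport_NP hpos hQ]⟩
    exact ⟨hQcan, by rw [NP_canonicalDatum hpos hPP hInv hQcan, hpart]⟩
  exact EtaDatum.ext_of_NP hpos (fun Q hQ => (key Q hQ).1) (fun Q hQ => (key Q hQ).2)

end Canonical

/-- (1) For any permutation `σ` of `{0,…,m-1}`, the set of set partitions of
`{0,…,m-1}` fixed setwise by `σ` is nonempty and closed under common
refinement. (2) For `σ = σ_μ`, a product of disjoint cycles of lengths
`μ_1,…,μ_l` covering `{0,…,m-1}`, every `σ_μ`-invariant set partition is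
uniquely of the form `η(ξ, f, {g_P})`. -/
theorem invariant_partitions (m : ℕ) :
    (∀ σ : ℕ → ℕ, Set.BijOn σ (Set.Iio m) (Set.Iio m) →
      {PP : Set (Set ℕ) | IsPartitionOn m PP ∧ Invariant σ PP}.Nonempty ∧
      ∀ PP QQ, IsPartitionOn m PP ∧ Invariant σ PP →
        IsPartitionOn m QQ ∧ Invariant σ QQ →
        IsPartitionOn m (commonRefinement PP QQ) ∧
          Invariant σ (commonRefinement PP QQ)) ∧
    (∀ μ : List ℕ, (∀ c ∈ μ, 0 < c) → μ.sum = m →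
      ∀ PP : Set (Set ℕ), IsPartitionOn m PP → Invariant (sigmaC μ) PP →
        ∃! D : EtaDatum μ, eta μ D = PP) := by
  refine ⟨fun σ hσ => ⟨⟨_, isPartitionOn_singletons m, invariant_singletons hσ.mapsTo⟩, ?_⟩, ?_⟩
  · rintro PP QQ ⟨hPP, hPi⟩ ⟨hQQ, hQi⟩
    exact ⟨isPartitionOn_commonRefinement hPP hQQ,
      invariant_commonRefinement hσ.injOn hPP hQQ hPi hQi⟩
  · rintro μ hpos rfl PP hPP hInv
    exact ⟨canonicalDatum hpos hPP hInv, eta_canonicalDatum hpos hPP hInv,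
      eq_canonicalDatum_of_eta_eq hpos hPP hInv⟩
end
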